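/- Compositionality of uioco: let s and e be composable labelled transition systems, and let i_s and i_e be input-enabled transition systems with I_{i_s} = I_s, U_{i_s} = U_s, I_{i_e} = I_e and U_{i_e} = U_e. If s and e are mutually accepting, i_s uioco s, and i_e uioco e, then i_s ‖ i_e uioco s ‖ e. -/

import Mathlib

/-- Visible labels extended with the quiescence label `δ`. -/
inductive DLabel (A : Type) where
  | act : A → DLabel A
  | δ : DLabel A
deriving DecidableEq

/-- A labelled transition system with state type `S` and label type `A`.
`T p none p'` is an internal (τ) transition; `T p (some a) p'` a visible one.
The set of states is the whole type `S`; the initial state is `q0`. -/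
structure LTS (S : Type) (A : Type) where
  T : S → Option A → S → Prop
  I : Set A
  U : Set A
  q0 : S

namespace LTS

variable {S E F A : Type}

/-- The set of visible labels. -/
def L (s : LTS S A) : Set A := s.I ∪ s.U

/-- Well-formedness of an LTS: countably many states and labels, inputs and
outputs disjoint, and visible transitions labelled in `I ∪ U`. -/
def WF (s : LTS S A) : Prop :=
  Countable S ∧ s.I.Countable ∧ s.U.Countable ∧ Disjoint s.I s.U ∧
    ∀ p a q, s.T p (some a) q → a ∈ s.L

/-- A state is quiescent if it has no output transitions and no τ-transitions. -/
def quiescent (s : LTS S A) (p : S) : Prop :=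
  (∀ x ∈ s.U, ∀ p', ¬ s.T p (some x) p') ∧ (∀ p', ¬ s.T p none p')

/-- Single-step transition relation for δ-extended labels: `δ` is a self-loop
on quiescent states. -/
def dstep (s : LTS S A) (p : S) : DLabel A → S → Prop
  | .act a, p' => s.T p (some a) p'
  | .δ, p' => p = p' ∧ s.quiescent p

/-- `eps p p'`: `p'` is reachable from `p` by finitely many τ-transitions. -/
def eps (s : LTS S A) : S → S → Prop :=
  Relation.ReflTransGen (fun p q => s.T p none q)

/-- Weak transition relation `p ⟹σ p'` over δ-extended traces. -/
def wtrans (s : LTS S A) : S → List (DLabel A) → S → Prop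
  | p, [], p' => s.eps p p'
  | p, ℓ :: σ, p'' => ∃ p1 p2, s.eps p p1 ∧ s.dstep p1 ℓ p2 ∧ s.wtrans p2 σ p''

/-- The δ-extended label set `L^δ` as a set of `DLabel`s. -/
def Ld (s : LTS S A) : Set (DLabel A) := (DLabel.act '' s.L) ∪ {DLabel.δ}

/-- `Utraces s`: δ-extended traces of `s` (from the initial state) that never
pass through a state refusing a subsequent input of the trace. -/
def Utraces (s : LTS S A) : Set (List (DLabel A)) :=
  { σ | (∀ ℓ ∈ σ, ℓ ∈ s.Ld) ∧ (∃ p, s.wtrans s.q0 σ p) ∧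
      ∀ σ1 a σ2, σ = σ1 ++ DLabel.act a :: σ2 → a ∈ s.I →
        ∀ p, s.wtrans s.q0 σ1 p → ∃ p', s.wtrans p [DLabel.act a] p' }

/-- `out p`: the outputs (including quiescence δ) enabled in state `p`. -/
def out (s : LTS S A) (p : S) : Set (DLabel A) :=
  { x | match x with
        | .act a => a ∈ s.U ∧ ∃ p', s.T p (some a) p'
        | .δ => s.quiescent p }

/-- `out` of a set of states. -/
def outSet (s : LTS S A) (P : Set S) : Set (DLabel A) := ⋃ p ∈ P, s.out p

/-- `inp p`: the inputs weakly enabled in state `p`. -/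
def inp (s : LTS S A) (p : S) : Set A :=
  { a | a ∈ s.I ∧ ∃ p', s.wtrans p [DLabel.act a] p' }

/-- The states reached from the initial state after trace `σ`. -/
def after (s : LTS S A) (σ : List (DLabel A)) : Set S :=
  { p' | s.wtrans s.q0 σ p' }

/-- Input-enabledness: every input is weakly enabled in every state. -/
def IOTS (s : LTS S A) : Prop :=
  ∀ q : S, ∀ a ∈ s.I, ∃ q', s.wtrans q [DLabel.act a] q'

/-- Two LTSs are composable iff their output sets are disjoint. -/
def Composable (s : LTS S A) (e : LTS E A) : Prop := Disjoint s.U e.U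

/-- Parallel composition of two LTSs: synchronisation on shared labels,
interleaving on non-shared labels and τ. -/
def par (s : LTS S A) (e : LTS E A) : LTS (S × E) A where
  I := (s.I \ e.U) ∪ (e.I \ s.U)
  U := s.U ∪ e.U
  q0 := (s.q0, e.q0)
  T := fun x ℓ y =>
    (s.T x.1 ℓ y.1 ∧ y.2 = x.2 ∧ (ℓ = none ∨ ∃ a ∈ s.L, ℓ = some a) ∧
      ∀ a ∈ e.L, ℓ ≠ some a) ∨
    (e.T x.2 ℓ y.2 ∧ y.1 = x.1 ∧ (ℓ = none ∨ ∃ a ∈ e.L, ℓ = some a) ∧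
      ∀ a ∈ s.L, ℓ ≠ some a) ∨
    (∃ a ∈ s.L ∩ e.L, ℓ = some a ∧ s.T x.1 (some a) y.1 ∧ e.T x.2 (some a) y.2)

/-- The uioco implementation relation. -/
def uioco (i : LTS E A) (s : LTS S A) : Prop :=
  ∀ σ ∈ s.Utraces, i.outSet (i.after σ) ⊆ s.outSet (s.after σ)

/-- `s.Accepts e`: along every Utrace of `s ‖ e`, every output of `e` that is an
input label of `s` is actually accepted by `s` and is an output of `e`. -/
def Accepts (s : LTS S A) (e : LTS E A) : Prop :=
  ∀ σ ∈ (s.par e).Utraces, ∀ p q, (s.par e).wtrans (s.par e).q0 σ (p, q) →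
    ∀ a, DLabel.act a ∈ e.out q → a ∈ s.I → a ∈ s.inp p ∧ a ∈ e.U

/-- Mutual acceptance. -/
def MutuallyAccepts (s : LTS S A) (e : LTS E A) : Prop := s.Accepts e ∧ e.Accepts s

/-- Isomorphism of LTSs: equal label sets and a bijection on states preserving
the initial state and all transitions (including τ and δ). -/
def Isomorphic (s : LTS S A) (s' : LTS E A) : Prop :=
  s.I = s'.I ∧ s.U = s'.U ∧ ∃ f : S ≃ E, f s.q0 = s'.q0 ∧
    (∀ p p' ℓ, s.T p ℓ p' ↔ s'.T (f p) ℓ (f p')) ∧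
    (∀ p p', s.dstep p DLabel.δ p' ↔ s'.dstep (f p) DLabel.δ (f p'))

open Classical in
/-- Projection of a trace onto a set of labels. -/
noncomputable def proj : List (DLabel A) → Set (DLabel A) → List (DLabel A)
  | [], _ => []
  | ℓ :: σ, 𝓛 => if ℓ ∈ 𝓛 then ℓ :: proj σ 𝓛 else proj σ 𝓛

end LTS

/-!
Project a run of `iS ‖ iE` on a Utrace `σ` of `s ‖ e` onto the alphabets of `s` and `e`: this
gives runs of `iS` and `iE` on the projections of `σ`, which mutual acceptance makes Utraces of
`s` and `e`, so `uioco` bounds the outputs of the components. Conversely, runs of `s` and `e` on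
the projections zip back into a run of `s ‖ e` on `σ`.

The crux is quiescence, since a δ of the composition must be a δ of both components. A quiescent
state of `s ‖ e` has quiescent components as soon as every output of one component that is an
input of the other is enabled there: otherwise that output, or a τ-step leading to it, would be a
move of the composition. Input-enabledness gives this for the implementations, mutual acceptance
along Utraces for the specifications. In the same way an output of `s` is an output of `s ‖ e`,
possibly after τ-steps of `e`.
-/

namespace LTS

variable {S E SI EI A : Type}

section Runs

variable {s : LTS S A} {p p' m : S} {a : A} {σ σ₁ σ₂ : List (DLabel A)}

theorem wtrans_of_eps_of_wtrans (h : s.eps p m) (hw : s.wtrans m σ p') : s.wtrans p σ p' := by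
  cases σ with
  | nil => exact h.trans hw
  | cons ℓ σ =>
    obtain ⟨p₁, p₂, h₁, h₂, h₃⟩ := hw
    exact ⟨p₁, p₂, h.trans h₁, h₂, h₃⟩

theorem wtrans_append :
    s.wtrans p (σ₁ ++ σ₂) p' ↔ ∃ m, s.wtrans p σ₁ m ∧ s.wtrans m σ₂ p' := by
  induction σ₁ generalizing p with
  | nil => exact ⟨fun h => ⟨p, .refl, h⟩, fun ⟨_, h₁, h₂⟩ => wtrans_of_eps_of_wtrans h₁ h₂⟩
  | cons ℓ σ₁ ih =>
    simp only [List.cons_append, wtrans, ih]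
    aesop

theorem wtrans_of_wtrans_of_eps (hw : s.wtrans p σ m) (h : s.eps m p') : s.wtrans p σ p' := by
  simpa using (wtrans_append (σ₂ := [])).2 ⟨m, hw, h⟩

theorem wtrans_singleton_of_T (h : s.T p (some a) p') : s.wtrans p [.act a] p' :=
  ⟨p, p', .refl, h, .refl⟩

theorem eq_of_eps_of_quiescent (hq : s.quiescent p) (h : s.eps p p') : p' = p := by
  rcases h.cases_head with rfl | ⟨c, hc, -⟩
  · rfl
  · exact absurd hc (hq.2 c)

theorem not_quiescent_of_act_mem_out (h : DLabel.act a ∈ s.out p) : ¬ s.quiescent p := by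
  obtain ⟨ha, p', hT⟩ := h
  exact fun hq => hq.1 a ha p' hT

theorem mem_outSet_after {x : DLabel A} :
    x ∈ s.outSet (s.after σ) ↔ ∃ p, s.wtrans s.q0 σ p ∧ x ∈ s.out p := by
  simp [outSet, after]

theorem mem_Utraces_of_append_mem (h : σ₁ ++ σ₂ ∈ s.Utraces) : σ₁ ∈ s.Utraces := by
  obtain ⟨hl, ⟨p, hp⟩, href⟩ := h
  refine ⟨fun ℓ hℓ => hl ℓ (List.mem_append_left _ hℓ), ?_, ?_⟩
  · obtain ⟨m, hm, -⟩ := wtrans_append.1 hp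
    exact ⟨m, hm⟩
  · rintro τ₁ a τ₂ rfl
    exact href τ₁ a (τ₂ ++ σ₂) (by simp)

theorem Ld_eq_of_eq {t : LTS E A} (hI : s.I = t.I) (hU : s.U = t.U) : s.Ld = t.Ld := by
  simp only [Ld, L, hI, hU]

end Runs

section Proj

variable {σ σ₁ σ₂ : List (DLabel A)} {ℓ : DLabel A} {𝓛 : Set (DLabel A)}

open Classical in
theorem proj_eq_filter (σ : List (DLabel A)) (𝓛 : Set (DLabel A)) :
    proj σ 𝓛 = σ.filter (· ∈ 𝓛) := by
  induction σ with
  | nil => rfl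
  | cons ℓ σ ih => by_cases h : ℓ ∈ 𝓛 <;> simp [proj, h, ih]

open Classical in
theorem mem_of_mem_proj (h : ℓ ∈ proj σ 𝓛) : ℓ ∈ 𝓛 := by
  rw [proj_eq_filter] at h
  exact of_decide_eq_true (List.mem_filter.1 h).2

theorem proj_append : proj (σ₁ ++ σ₂) 𝓛 = proj σ₁ 𝓛 ++ proj σ₂ 𝓛 := by
  simp only [proj_eq_filter, List.filter_append]

theorem exists_eq_append_cons_of_proj_eq (h : proj σ 𝓛 = σ₁ ++ ℓ :: σ₂) :
    ∃ τ₁ τ₂, σ = τ₁ ++ ℓ :: τ₂ ∧ proj τ₁ 𝓛 = σ₁ := by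
  rw [proj_eq_filter] at h
  obtain ⟨l₁, l₂, rfl, h₁, h₂⟩ := List.filter_eq_append_iff.1 h
  obtain ⟨l₃, l₄, rfl, h₃, -, -⟩ := List.filter_eq_cons_iff.1 h₂
  refine ⟨l₁ ++ l₃, l₄, by simp, ?_⟩
  rw [proj_eq_filter, List.filter_append, h₁, List.filter_eq_nil_iff.2 h₃, List.append_nil]

end Proj

section Equiv

variable {s : LTS S A} {t : LTS E A} (f : S ≃ E) {p p' : S}

theorem quiescent_equiv_iff (hT : ∀ p ℓ p', t.T (f p) ℓ (f p') ↔ s.T p ℓ p') (hU : t.U = s.U) :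
    t.quiescent (f p) ↔ s.quiescent p := by
  simp only [quiescent, hU, ← f.forall_congr_right, hT]

theorem eps_equiv_iff (hT : ∀ p ℓ p', t.T (f p) ℓ (f p') ↔ s.T p ℓ p') :
    t.eps (f p) (f p') ↔ s.eps p p' := by
  refine ⟨fun h => ?_, fun h => h.lift f fun x y hxy => (hT x none y).2 hxy⟩
  simpa [Function.onFun, eps] using h.lift (p := fun x y => s.T x none y) f.symm
    fun x y hxy => (hT (f.symm x) none (f.symm y)).1 (by simpa using hxy)

theorem wtrans_equiv_iff (hT : ∀ p ℓ p', t.T (f p) ℓ (f p') ↔ s.T p ℓ p') (hU : t.U = s.U)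
    {σ : List (DLabel A)} : t.wtrans (f p) σ (f p') ↔ s.wtrans p σ p' := by
  induction σ generalizing p with
  | nil => exact eps_equiv_iff f hT
  | cons ℓ σ ih =>
    cases ℓ <;>
      simp [wtrans, dstep, ← f.exists_congr_right, eps_equiv_iff f hT, ih, hT,
        quiescent_equiv_iff f hT hU]

theorem Utraces_eq_of_equiv (hT : ∀ p ℓ p', t.T (f p) ℓ (f p') ↔ s.T p ℓ p')
    (hI : t.I = s.I) (hU : t.U = s.U) (hq₀ : t.q0 = f s.q0) : t.Utraces = s.Utraces := by
  ext σ
  simp only [Utraces, Ld_eq_of_eq hI hU, hI, hq₀, ← f.exists_congr_right, ← f.forall_congr_right,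
    wtrans_equiv_iff f hT hU]

theorem outSet_after_eq_of_equiv (hT : ∀ p ℓ p', t.T (f p) ℓ (f p') ↔ s.T p ℓ p')
    (hU : t.U = s.U) (hq₀ : t.q0 = f s.q0) (σ : List (DLabel A)) :
    t.outSet (t.after σ) = s.outSet (s.after σ) := by
  ext x
  cases x <;>
    simp [mem_outSet_after, out, hq₀, hU, hT, ← f.exists_congr_right, wtrans_equiv_iff f hT hU,
      quiescent_equiv_iff f hT hU]

end Equiv

section Par

variable {s : LTS S A} {e : LTS E A} {p p' : S} {q q' : E} {P P' : S × E} {a : A}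
  {σ : List (DLabel A)}

theorem act_mem_Ld : DLabel.act a ∈ s.Ld ↔ a ∈ s.L := by
  simp [Ld]

theorem δ_mem_Ld : DLabel.δ ∈ s.Ld := Or.inr rfl

theorem par_L : (s.par e).L = s.L ∪ e.L := by
  ext a
  simp only [L, par, Set.mem_union, Set.mem_sdiff]
  tauto

theorem par_T_tau_left (h : s.T p none p') (q : E) : (s.par e).T (p, q) none (p', q) :=
  Or.inl ⟨h, rfl, Or.inl rfl, fun _ _ => nofun⟩

theorem par_T_tau_right (p : S) (h : e.T q none q') : (s.par e).T (p, q) none (p, q') :=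
  Or.inr (Or.inl ⟨h, rfl, Or.inl rfl, fun _ _ => nofun⟩)

theorem par_T_act_left (h : s.T p (some a) p') (has : a ∈ s.L) (hae : a ∉ e.L) (q : E) :
    (s.par e).T (p, q) (some a) (p', q) :=
  Or.inl ⟨h, rfl, Or.inr ⟨a, has, rfl⟩, fun _ hb hba => hae (Option.some_injective _ hba ▸ hb)⟩

theorem par_T_act_right (p : S) (h : e.T q (some a) q') (hae : a ∈ e.L) (has : a ∉ s.L) :
    (s.par e).T (p, q) (some a) (p, q') :=
  Or.inr (Or.inl ⟨h, rfl, Or.inr ⟨a, hae, rfl⟩,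
    fun _ hb hba => has (Option.some_injective _ hba ▸ hb)⟩)

theorem par_T_sync (hs : s.T p (some a) p') (he : e.T q (some a) q') (has : a ∈ s.L)
    (hae : a ∈ e.L) : (s.par e).T (p, q) (some a) (p', q') :=
  Or.inr (Or.inr ⟨a, ⟨has, hae⟩, rfl, hs, he⟩)

theorem par_T_none (h : (s.par e).T P none P') :
    (s.T P.1 none P'.1 ∧ P'.2 = P.2) ∨ (e.T P.2 none P'.2 ∧ P'.1 = P.1) := by
  rcases h with ⟨h, h', -⟩ | ⟨h, h', -⟩ | ⟨_, -, ⟨⟩, -⟩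
  exacts [Or.inl ⟨h, h'⟩, Or.inr ⟨h, h'⟩]

theorem T_fst_of_par_T (h : (s.par e).T P (some a) P') (ha : a ∈ s.L) : s.T P.1 (some a) P'.1 := by
  rcases h with ⟨h, -⟩ | ⟨-, -, -, h⟩ | ⟨_, -, ⟨⟩, h, -⟩
  exacts [h, absurd rfl (h a ha), h]

theorem T_snd_of_par_T (h : (s.par e).T P (some a) P') (ha : a ∈ e.L) : e.T P.2 (some a) P'.2 := by
  rcases h with ⟨-, -, -, h⟩ | ⟨h, -⟩ | ⟨_, -, ⟨⟩, -, h⟩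
  exacts [absurd rfl (h a ha), h, h]

theorem fst_eq_of_par_T (h : (s.par e).T P (some a) P') (ha : a ∉ s.L) : P'.1 = P.1 := by
  rcases h with ⟨-, -, hL, -⟩ | ⟨-, h, -⟩ | ⟨_, ⟨hb, -⟩, ⟨⟩, -⟩
  · obtain h | ⟨_, hb, h⟩ := hL
    · cases h
    · cases h
      exact absurd hb ha
  · exact h
  · exact absurd hb ha

theorem act_mem_out_of_act_mem_out_par (h : DLabel.act a ∈ (s.par e).out (p, q)) :
    DLabel.act a ∈ s.out p ∨ DLabel.act a ∈ e.out q := by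
  obtain ⟨ha | ha, P', hT⟩ := h
  exacts [Or.inl ⟨ha, P'.1, T_fst_of_par_T hT (Or.inr ha)⟩,
    Or.inr ⟨ha, P'.2, T_snd_of_par_T hT (Or.inr ha)⟩]

theorem par_T_comm {ℓ : Option A} : (e.par s).T P.swap ℓ P'.swap ↔ (s.par e).T P ℓ P' := by
  simp only [par, Prod.fst_swap, Prod.snd_swap, Set.mem_inter_iff]
  aesop

theorem wtrans_par_comm : (e.par s).wtrans P.swap σ P'.swap ↔ (s.par e).wtrans P σ P' :=
  wtrans_equiv_iff (Equiv.prodComm S E) (fun _ _ _ => par_T_comm) (Set.union_comm _ _)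

theorem quiescent_par_comm : (e.par s).quiescent P.swap ↔ (s.par e).quiescent P :=
  quiescent_equiv_iff (Equiv.prodComm S E) (fun _ _ _ => par_T_comm) (Set.union_comm _ _)

theorem Utraces_par_comm : (e.par s).Utraces = (s.par e).Utraces :=
  Utraces_eq_of_equiv (Equiv.prodComm S E) (fun _ _ _ => par_T_comm) (Set.union_comm _ _)
    (Set.union_comm _ _) rfl

theorem outSet_after_par_comm (σ : List (DLabel A)) :
    (e.par s).outSet ((e.par s).after σ) = (s.par e).outSet ((s.par e).after σ) :=
  outSet_after_eq_of_equiv (Equiv.prodComm S E) (fun _ _ _ => par_T_comm) (Set.union_comm _ _) rfl σ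

theorem MutuallyAccepts.symm (h : s.MutuallyAccepts e) : e.MutuallyAccepts s := ⟨h.2, h.1⟩

theorem eps_par (hs : s.eps p p') (he : e.eps q q') : (s.par e).eps (p, q) (p', q') :=
  (hs.lift (fun x => (x, q)) fun _ _ h => par_T_tau_left h q).trans
    (he.lift (fun y => (p', y)) fun _ _ h => par_T_tau_right p' h)

theorem eps_of_eps_par (h : (s.par e).eps P P') : s.eps P.1 P'.1 ∧ e.eps P.2 P'.2 := by
  induction h with
  | refl => exact ⟨.refl, .refl⟩
  | tail _ hT ih =>
    rcases par_T_none hT with ⟨h, h'⟩ | ⟨h, h'⟩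
    · exact ⟨ih.1.tail h, h' ▸ ih.2⟩
    · exact ⟨h' ▸ ih.1, ih.2.tail h⟩

theorem quiescent_par (hp : s.quiescent p) (hq : e.quiescent q) : (s.par e).quiescent (p, q) := by
  refine ⟨fun x hx P' hT => ?_, fun P' hT => ?_⟩
  · rcases hx with hx | hx
    exacts [hp.1 x hx _ (T_fst_of_par_T hT (Or.inr hx)),
      hq.1 x hx _ (T_snd_of_par_T hT (Or.inr hx))]
  · rcases par_T_none hT with ⟨h, -⟩ | ⟨h, -⟩
    exacts [hp.2 _ h, hq.2 _ h]

end Par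

section Composition

variable {s : LTS S A} {e : LTS E A} {p p' : S} {q q' : E} {P P' : S × E} {a : A}
  {σ : List (DLabel A)}

theorem exists_out_par_of_out_left (hc : Disjoint s.U e.U) (ha : DLabel.act a ∈ s.out p)
    (hacc : a ∈ e.I → a ∈ e.inp q) : ∃ q', e.eps q q' ∧ DLabel.act a ∈ (s.par e).out (p, q') := by
  obtain ⟨haU, p', hT⟩ := ha
  by_cases hae : a ∈ e.L
  · have haI : a ∈ e.I := hae.resolve_right (Set.disjoint_left.1 hc haU)
    obtain ⟨-, -, q₁, q₂, hq₁, hT', -⟩ := hacc haI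
    exact ⟨q₁, hq₁, Or.inl haU, (p', q₂), par_T_sync hT hT' (Or.inr haU) hae⟩
  · exact ⟨q, .refl, Or.inl haU, (p', q), par_T_act_left hT (Or.inr haU) hae q⟩

theorem quiescent_left_of_quiescent_par (hc : Disjoint s.U e.U) (hq : (s.par e).quiescent (p, q))
    (hacc : ∀ a, DLabel.act a ∈ s.out p → a ∈ e.I → a ∈ e.inp q) : s.quiescent p := by
  refine ⟨fun a ha p' hT => ?_, fun p' hT => hq.2 _ (par_T_tau_left hT q)⟩
  obtain ⟨q', hq', hout⟩ := exists_out_par_of_out_left hc ⟨ha, p', hT⟩ (hacc a ⟨ha, p', hT⟩)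
  -- a quiescent state has no τ-steps, so `e` cannot have moved
  have hqq' : (p, q') = (p, q) := eq_of_eps_of_quiescent hq (eps_par .refl hq')
  exact not_quiescent_of_act_mem_out (hqq' ▸ hout) hq

theorem quiescent_of_quiescent_par (hc : Disjoint s.U e.U) (hq : (s.par e).quiescent (p, q))
    (hs : ∀ a, DLabel.act a ∈ s.out p → a ∈ e.I → a ∈ e.inp q)
    (he : ∀ a, DLabel.act a ∈ e.out q → a ∈ s.I → a ∈ s.inp p) :
    s.quiescent p ∧ e.quiescent q :=
  ⟨quiescent_left_of_quiescent_par hc hq hs,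
    quiescent_left_of_quiescent_par hc.symm (quiescent_par_comm.2 hq) he⟩

theorem wtrans_par_singleton_of_wtrans_proj {ℓ : DLabel A} (hℓ : ℓ ∈ (s.par e).Ld)
    (hs : s.wtrans p (proj [ℓ] s.Ld) p') (he : e.wtrans q (proj [ℓ] e.Ld) q') :
    (s.par e).wtrans (p, q) [ℓ] (p', q') := by
  rcases hℓ with ⟨a, ha, rfl⟩ | rfl
  · rw [par_L] at ha
    by_cases has : a ∈ s.L <;> by_cases hae : a ∈ e.L <;>
      simp only [proj, act_mem_Ld, has, hae, if_true, if_false] at hs he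
    · obtain ⟨p₁, p₂, hp₁, hT, hp₂⟩ := hs
      obtain ⟨q₁, q₂, hq₁, hT', hq₂⟩ := he
      exact ⟨(p₁, q₁), (p₂, q₂), eps_par hp₁ hq₁, par_T_sync hT hT' has hae, eps_par hp₂ hq₂⟩
    · obtain ⟨p₁, p₂, hp₁, hT, hp₂⟩ := hs
      exact ⟨(p₁, q), (p₂, q), eps_par hp₁ .refl, par_T_act_left hT has hae q, eps_par hp₂ he⟩
    · obtain ⟨q₁, q₂, hq₁, hT, hq₂⟩ := he
      exact ⟨(p, q₁), (p, q₂), eps_par .refl hq₁, par_T_act_right p hT hae has, eps_par hs hq₂⟩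
    · exact absurd ha (by simp [has, hae])
  · simp only [proj, δ_mem_Ld, if_true] at hs he
    obtain ⟨p₁, _, hp₁, ⟨rfl, hqp⟩, hp₂⟩ := hs
    obtain ⟨q₁, _, hq₁, ⟨rfl, hqq⟩, hq₂⟩ := he
    exact ⟨(p₁, q₁), (p₁, q₁), eps_par hp₁ hq₁, ⟨rfl, quiescent_par hqp hqq⟩, eps_par hp₂ hq₂⟩

theorem wtrans_par_of_wtrans_proj (hσ : ∀ ℓ ∈ σ, ℓ ∈ (s.par e).Ld)
    (hs : s.wtrans p (proj σ s.Ld) p') (he : e.wtrans q (proj σ e.Ld) q') :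
    (s.par e).wtrans (p, q) σ (p', q') := by
  induction σ generalizing p q with
  | nil => exact eps_par hs he
  | cons ℓ σ ih =>
    rw [← List.singleton_append, proj_append, wtrans_append] at hs he
    rw [← List.singleton_append, wtrans_append]
    obtain ⟨p₁, hp₁, hp⟩ := hs
    obtain ⟨q₁, hq₁, hq⟩ := he
    exact ⟨(p₁, q₁), wtrans_par_singleton_of_wtrans_proj (hσ ℓ (by simp)) hp₁ hq₁,
      ih (fun ℓ h => hσ ℓ (by simp [h])) hp hq⟩

theorem wtrans_proj_of_T_par (h : (s.par e).T P (some a) P') :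
    s.wtrans P.1 (proj [.act a] s.Ld) P'.1 := by
  by_cases ha : a ∈ s.L
  · simp only [proj, act_mem_Ld, ha, if_true]
    exact wtrans_singleton_of_T (T_fst_of_par_T h ha)
  · simp only [proj, act_mem_Ld, ha, if_false]
    rw [fst_eq_of_par_T h ha]
    exact .refl

-- A quiescent state of `s ‖ e` may have a non-quiescent `s`-component whose outputs `e` blocks.
theorem wtrans_proj_left_of_wtrans_par (h : (s.par e).wtrans P σ P')
    (hδ : ∀ σ₁ σ₂ r, σ = σ₁ ++ .δ :: σ₂ → (s.par e).wtrans P σ₁ r → (s.par e).quiescent r →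
      s.quiescent r.1) :
    s.wtrans P.1 (proj σ s.Ld) P'.1 := by
  induction σ generalizing P with
  | nil => exact (eps_of_eps_par h).1
  | cons ℓ σ ih =>
    obtain ⟨P₁, P₂, hP₁, hstep, hP₂⟩ := h
    have hrest := ih hP₂ fun σ₁ σ₂ r hσ hr =>
      hδ (ℓ :: σ₁) σ₂ r (by rw [hσ]; rfl) ⟨P₁, P₂, hP₁, hstep, hr⟩
    rw [← List.singleton_append, proj_append, wtrans_append]
    refine ⟨P₂.1, wtrans_of_eps_of_wtrans (eps_of_eps_par hP₁).1 ?_, hrest⟩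
    cases ℓ with
    | act a => exact wtrans_proj_of_T_par hstep
    | δ =>
      obtain ⟨rfl, hq⟩ := hstep
      simp only [proj, δ_mem_Ld, if_true]
      exact ⟨P₁.1, P₁.1, .refl, ⟨rfl, hδ [] σ P₁ rfl hP₁ hq⟩, .refl⟩

theorem wtrans_proj_of_wtrans_par (h : (s.par e).wtrans P σ P')
    (hδ : ∀ σ₁ σ₂ r, σ = σ₁ ++ .δ :: σ₂ → (s.par e).wtrans P σ₁ r → (s.par e).quiescent r →
      s.quiescent r.1 ∧ e.quiescent r.2) :
    s.wtrans P.1 (proj σ s.Ld) P'.1 ∧ e.wtrans P.2 (proj σ e.Ld) P'.2 :=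
  ⟨wtrans_proj_left_of_wtrans_par h fun σ₁ σ₂ r hσ hr hq => (hδ σ₁ σ₂ r hσ hr hq).1,
    wtrans_proj_left_of_wtrans_par (wtrans_par_comm.2 h) fun σ₁ σ₂ r hσ hr hq =>
      (hδ σ₁ σ₂ r.swap hσ (wtrans_par_comm.1 (by rwa [Prod.swap_swap]))
        (quiescent_par_comm.1 (by rwa [Prod.swap_swap]))).2⟩

end Composition

section Specifications

variable {s : LTS S A} {e : LTS E A} {p : S} {q : E} {P : S × E} {a : A} {σ : List (DLabel A)}

theorem Accepts.mem_inp_of_par_symm (h : e.Accepts s) (hσ : σ ∈ (s.par e).Utraces)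
    (hr : (s.par e).wtrans (s.par e).q0 σ (p, q)) (ha : DLabel.act a ∈ s.out p) (haI : a ∈ e.I) :
    a ∈ e.inp q :=
  (h σ (Utraces_par_comm ▸ hσ) q p (wtrans_par_comm.2 hr) a ha haI).1

theorem quiescent_of_quiescent_par_of_mutuallyAccepts (hc : Disjoint s.U e.U)
    (hma : s.MutuallyAccepts e) (hσ : σ ∈ (s.par e).Utraces)
    (hr : (s.par e).wtrans (s.par e).q0 σ (p, q)) (hq : (s.par e).quiescent (p, q)) :
    s.quiescent p ∧ e.quiescent q :=
  quiescent_of_quiescent_par hc hq (fun _ ha haI => hma.2.mem_inp_of_par_symm hσ hr ha haI)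
    (fun a ha haI => (hma.1 σ hσ p q hr a ha haI).1)

theorem wtrans_proj_of_mem_Utraces (hc : Disjoint s.U e.U) (hma : s.MutuallyAccepts e)
    (hσ : σ ∈ (s.par e).Utraces) (hr : (s.par e).wtrans (s.par e).q0 σ P) :
    s.wtrans s.q0 (proj σ s.Ld) P.1 ∧ e.wtrans e.q0 (proj σ e.Ld) P.2 :=
  wtrans_proj_of_wtrans_par hr fun _ _ _ hσ' hr' hq =>
    quiescent_of_quiescent_par_of_mutuallyAccepts hc hma (mem_Utraces_of_append_mem (hσ' ▸ hσ))
      hr' hq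

theorem proj_mem_Utraces (hc : Disjoint s.U e.U) (hma : s.MutuallyAccepts e)
    (hσ : σ ∈ (s.par e).Utraces) : proj σ s.Ld ∈ s.Utraces := by
  obtain ⟨hl, ⟨R, hR⟩, href⟩ := id hσ
  refine ⟨fun ℓ hℓ => mem_of_mem_proj hℓ, ⟨R.1, (wtrans_proj_of_mem_Utraces hc hma hσ hR).1⟩, ?_⟩
  intro σ₁ a σ₂ hdec haI p₁ hp₁
  obtain ⟨τ₁, τ₂, rfl, rfl⟩ := exists_eq_append_cons_of_proj_eq hdec
  obtain ⟨M, hM, M₁, M₂, hM₁, hstep, -⟩ := wtrans_append.1 hR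
  have hτ₁ : τ₁ ∈ (s.par e).Utraces := mem_Utraces_of_append_mem hσ
  have hr : (s.par e).wtrans (s.par e).q0 τ₁ (p₁, M₁.2) :=
    wtrans_par_of_wtrans_proj (fun ℓ h => hl ℓ (List.mem_append_left _ h)) hp₁
      (wtrans_proj_of_mem_Utraces hc hma hτ₁ (wtrans_of_wtrans_of_eps hM hM₁)).2
  -- an output of `e` is enabled in `s` since `s` accepts `e`; otherwise `a` is an input of
  -- `s ‖ e`, enabled by the Utrace condition
  by_cases haU : a ∈ e.U
  · exact (hma.1 τ₁ hτ₁ p₁ M₁.2 hr a ⟨haU, M₂.2, T_snd_of_par_T hstep (Or.inr haU)⟩ haI).1.2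
  · obtain ⟨P', hP'⟩ := href τ₁ a τ₂ rfl (Or.inl ⟨haI, haU⟩) _ hr
    have hs := (wtrans_proj_of_wtrans_par hP' fun σ₁ σ₂ _ h => by
      simp [List.cons_eq_append_iff] at h).1
    simp only [proj, act_mem_Ld.2 (Or.inl haI), if_true] at hs
    exact ⟨_, hs⟩

theorem act_mem_outSet_after_par (hc : Disjoint s.U e.U) (hma : s.MutuallyAccepts e)
    (hσ : σ ∈ (s.par e).Utraces) (ha : DLabel.act a ∈ s.outSet (s.after (proj σ s.Ld))) :
    DLabel.act a ∈ (s.par e).outSet ((s.par e).after σ) := by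
  obtain ⟨R, hR⟩ := hσ.2.1
  obtain ⟨p, hp, ha⟩ := mem_outSet_after.1 ha
  have he := (wtrans_proj_of_mem_Utraces hc hma hσ hR).2
  obtain ⟨q, hq, hout⟩ := exists_out_par_of_out_left hc ha
    (hma.2.mem_inp_of_par_symm hσ (wtrans_par_of_wtrans_proj hσ.1 hp he) ha)
  exact mem_outSet_after.2
    ⟨(p, q), wtrans_par_of_wtrans_proj hσ.1 hp (wtrans_of_wtrans_of_eps he hq), hout⟩

theorem δ_mem_outSet_after_par (hσ : ∀ ℓ ∈ σ, ℓ ∈ (s.par e).Ld)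
    (hs : DLabel.δ ∈ s.outSet (s.after (proj σ s.Ld)))
    (he : DLabel.δ ∈ e.outSet (e.after (proj σ e.Ld))) :
    DLabel.δ ∈ (s.par e).outSet ((s.par e).after σ) := by
  obtain ⟨p, hp, hqp⟩ := mem_outSet_after.1 hs
  obtain ⟨q, hq, hqq⟩ := mem_outSet_after.1 he
  exact mem_outSet_after.2 ⟨(p, q), wtrans_par_of_wtrans_proj hσ hp hq, quiescent_par hqp hqq⟩

end Specifications

section Implementations

variable {s : LTS S A} {e : LTS E A} {iS : LTS SI A} {iE : LTS EI A} {p : SI} {q : EI}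
  {σ : List (DLabel A)}

theorem quiescent_of_quiescent_par_of_IOTS (hc : Disjoint iS.U iE.U) (his : iS.IOTS)
    (hie : iE.IOTS) (hq : (iS.par iE).quiescent (p, q)) : iS.quiescent p ∧ iE.quiescent q :=
  quiescent_of_quiescent_par hc hq (fun a _ ha => ⟨ha, hie q a ha⟩) (fun a _ ha => ⟨ha, his p a ha⟩)

theorem out_subset_outSet_after_proj (hc : Disjoint s.U e.U) (hma : s.MutuallyAccepts e)
    (hcI : Disjoint iS.U iE.U) (his : iS.IOTS) (hie : iE.IOTS) (hIs : iS.I = s.I)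
    (hUs : iS.U = s.U) (h : iS.uioco s) (hσ : σ ∈ (s.par e).Utraces)
    (hr : (iS.par iE).wtrans (iS.par iE).q0 σ (p, q)) :
    iS.out p ⊆ s.outSet (s.after (proj σ s.Ld)) := by
  have hp := (wtrans_proj_of_wtrans_par hr fun _ _ _ _ _ hq =>
    quiescent_of_quiescent_par_of_IOTS hcI his hie hq).1
  rw [Ld_eq_of_eq hIs hUs] at hp
  exact fun x hx => h _ (proj_mem_Utraces hc hma hσ) (mem_outSet_after.2 ⟨p, hp, hx⟩)

end Implementations

end LTS

theorem uioco_par_of_mutuallyAccepts_general {S E SI EI A : Type}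
    (s : LTS S A) (e : LTS E A) (iS : LTS SI A) (iE : LTS EI A)
    (hc : LTS.Composable s e)
    (his : iS.IOTS) (hie : iE.IOTS)
    (hIs : iS.I = s.I) (hUs : iS.U = s.U) (hIe : iE.I = e.I) (hUe : iE.U = e.U)
    (hma : s.MutuallyAccepts e)
    (h1 : iS.uioco s) (h2 : iE.uioco e) :
    (iS.par iE).uioco (s.par e) := by
  intro σ hσ x hx
  obtain ⟨⟨p, q⟩, hr, hx⟩ := LTS.mem_outSet_after.1 hx
  have hcI : Disjoint iS.U iE.U := by rwa [hUs, hUe]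
  have hσ' : σ ∈ (e.par s).Utraces := by rwa [LTS.Utraces_par_comm]
  have hS := LTS.out_subset_outSet_after_proj hc hma hcI his hie hIs hUs h1 hσ hr
  have hE := LTS.out_subset_outSet_after_proj hc.symm hma.symm hcI.symm hie his hIe hUe h2 hσ'
    (LTS.wtrans_par_comm.2 hr)
  cases x with
  | act a =>
    rcases LTS.act_mem_out_of_act_mem_out_par hx with ha | ha
    · exact LTS.act_mem_outSet_after_par hc hma hσ (hS ha)
    · rw [← LTS.outSet_after_par_comm]
      exact LTS.act_mem_outSet_after_par hc.symm hma.symm hσ' (hE ha)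
  | δ =>
    obtain ⟨hp, hq⟩ := LTS.quiescent_of_quiescent_par_of_IOTS hcI his hie hx
    exact LTS.δ_mem_outSet_after_par hσ.1 (hS hp) (hE hq)

/-- compositionality of uioco: for mutually accepting composable
specifications and uioco-correct input-enabled implementations, the composition
of the implementations is uioco-correct w.r.t. the composed specification. -/
theorem uioco_par_of_mutuallyAccepts {S E SI EI A : Type}
    (s : LTS S A) (e : LTS E A) (iS : LTS SI A) (iE : LTS EI A)
    (hs : s.WF) (he : e.WF) (hiswf : iS.WF) (hiewf : iE.WF)
    (hc : LTS.Composable s e)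
    (his : iS.IOTS) (hie : iE.IOTS)
    (hIs : iS.I = s.I) (hUs : iS.U = s.U) (hIe : iE.I = e.I) (hUe : iE.U = e.U)
    (hma : s.MutuallyAccepts e)
    (h1 : iS.uioco s) (h2 : iE.uioco e) :
    (iS.par iE).uioco (s.par e) :=
  uioco_par_of_mutuallyAccepts_general s e iS iE hc his hie hIs hUs hIe hUe hma h1 h2
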